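/- arXiv:1805.06518 — 4 statements merged into one kernel-verified Lean document; each statement's English description precedes it below -/
import Mathlib

section
/- Let $0<\kappa<1$ and let $\mu$ be a finite Borel measure on $(0,\infty)$ with compact support bounded away from $0$. Define $V_o(\alpha) = (1+\kappa)\int_0^{\alpha} t \left(\int_{(t,\infty)} \frac{1}{\sqrt{y^2 - (1-\kappa^2)t^2}}\, d\mu(y)\right) dt$. Then $V_o(\alpha) = \int_{(0,\alpha]} y\, d\mu(y) + \frac{1}{1-\kappa}\int_{(\alpha,\infty)} \left(y - \sqrt{y^2 - (1-\kappa^2)\alpha^2}\right) d\mu(y)$ for every $\alpha>0$. -/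
/-!
After dividing by `1 + κ`, `V_o(α)` is the integral of `t / √(y² - c t²)`, `c = 1 - κ²`, over
`{0 < t ≤ α, t < y}` against `dt ⊗ μ`. There the integrand is at most `1 / κ`, so Fubini lets us
integrate in `t` first. With the antiderivative `-√(y² - c t²) / c` the `t`-integral up to
`min α y` is `(1 - κ) y / c` for `y ≤ α` and `(y - √(y² - c α²)) / c` for `y > α`; multiplying by
`1 + κ` gives the two terms of the formula.
-/

open MeasureTheory intervalIntegral Set

theorem integral_eq_setIntegral_Ioc_add_setIntegral_Ioi {E : Type*} [NormedAddCommGroup E]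
    [NormedSpace ℝ E] {ν : Measure ℝ} {f : ℝ → E} (hf : Integrable f ν) (α : ℝ)
    (hf0 : ∀ y ≤ 0, f y = 0) :
    ∫ y, f y ∂ν = ∫ y in Ioc 0 α, f y ∂ν + ∫ y in Ioi α, f y ∂ν := by
  rw [← integral_add_compl measurableSet_Ioi hf, compl_Ioi, add_comm,
    setIntegral_eq_of_subset_of_forall_sdiff_eq_zero measurableSet_Iic Ioc_subset_Iic_self]
  rintro y ⟨hyα, hy⟩
  exact hf0 y (not_lt.1 fun hy0 => hy ⟨hy0, hyα⟩)

noncomputable def tubeKernel (c t y : ℝ) : ℝ :=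
  if t < y then t * (1 / √(y ^ 2 - c * t ^ 2)) else 0

section TubeKernel

variable {c : ℝ}

theorem measurable_uncurry_tubeKernel : Measurable (Function.uncurry (tubeKernel c)) :=
  Measurable.ite (measurableSet_lt measurable_fst measurable_snd) (by fun_prop) measurable_const

theorem abs_tubeKernel_le (hc : c < 1) {t : ℝ} (ht : 0 ≤ t) (y : ℝ) :
    |tubeKernel c t y| ≤ 1 / √(1 - c) := by
  unfold tubeKernel
  split_ifs with hty
  · rcases ht.eq_or_lt with rfl | ht
    · simp
    have hroot : √(1 - c) * t ≤ √(y ^ 2 - c * t ^ 2) :=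
      calc √(1 - c) * t = √((1 - c) * t ^ 2) := by
            rw [Real.sqrt_mul (by linarith), Real.sqrt_sq ht.le]
        _ ≤ √(y ^ 2 - c * t ^ 2) := Real.sqrt_le_sqrt (by nlinarith)
    have hpos : 0 < √(1 - c) * t := mul_pos (Real.sqrt_pos.2 (by linarith)) ht
    rw [abs_of_nonneg (by positivity), mul_one_div, div_le_div_iff₀ (hpos.trans_le hroot)
      (Real.sqrt_pos.2 (by linarith))]
    nlinarith
  · simp only [abs_zero]
    positivity

theorem integrable_uncurry_tubeKernel (hc : c < 1) (ν : Measure ℝ) [IsFiniteMeasure ν] {α : ℝ} :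
    Integrable (Function.uncurry (tubeKernel c)) ((volume.restrict (Ioc 0 α)).prod ν) := by
  have : IsFiniteMeasure (volume.restrict (Ioc (0 : ℝ) α)) :=
    isFiniteMeasure_restrict.2 measure_Ioc_lt_top.ne
  refine (integrable_const (1 / √(1 - c))).mono'
    measurable_uncurry_tubeKernel.aestronglyMeasurable ?_
  rw [Measure.ae_prod_iff_ae_ae
    (measurableSet_le measurable_uncurry_tubeKernel.norm measurable_const)]
  filter_upwards [ae_restrict_mem measurableSet_Ioc] with t ht
  exact ae_of_all _ fun y => abs_tubeKernel_le hc ht.1.le y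

theorem integral_tubeKernel_left (ν : Measure ℝ) (t : ℝ) :
    ∫ y, tubeKernel c t y ∂ν = t * ∫ y in Ioi t, 1 / √(y ^ 2 - c * t ^ 2) ∂ν := by
  rw [← MeasureTheory.integral_const_mul, ← MeasureTheory.integral_indicator measurableSet_Ioi]
  rfl

theorem integral_mul_one_div_sqrt_sq_sub (hc : 0 < c) {y β : ℝ} (hy : 0 ≤ y) (hβ : 0 ≤ β)
    (hβy : c * β ^ 2 < y ^ 2) :
    ∫ t in (0 : ℝ)..β, t * (1 / √(y ^ 2 - c * t ^ 2)) = (y - √(y ^ 2 - c * β ^ 2)) / c := by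
  have hpos : ∀ t ∈ uIcc 0 β, 0 < y ^ 2 - c * t ^ 2 := by
    intro t ht
    rw [uIcc_of_le hβ] at ht
    nlinarith [mul_le_mul_of_nonneg_left (pow_le_pow_left₀ ht.1 ht.2 2) hc.le]
  have hderiv : ∀ t ∈ uIcc 0 β, HasDerivAt (fun t => -1 / c * √(y ^ 2 - c * t ^ 2))
      (t * (1 / √(y ^ 2 - c * t ^ 2))) t := by
    intro t ht
    have hinner : HasDerivAt (fun t => y ^ 2 - c * t ^ 2) (-(c * (2 * t))) t := by
      simpa using ((hasDerivAt_pow 2 t).const_mul c).const_sub (y ^ 2)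
    refine ((hinner.sqrt (hpos t ht).ne').const_mul (-1 / c)).congr_deriv ?_
    field_simp
  have hcont : ContinuousOn (fun t => t * (1 / √(y ^ 2 - c * t ^ 2))) (uIcc 0 β) :=
    continuousOn_id.mul <| continuousOn_const.div (by fun_prop)
      fun t ht => (Real.sqrt_pos.2 (hpos t ht)).ne'
  rw [integral_eq_sub_of_hasDerivAt hderiv hcont.intervalIntegrable]
  simp only [ne_eq, OfNat.ofNat_ne_zero, not_false_eq_true, zero_pow, mul_zero, sub_zero,
    Real.sqrt_sq hy]
  ring

theorem setIntegral_tubeKernel_of_nonpos {α y : ℝ} (hy : y ≤ 0) :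
    ∫ t in Ioc 0 α, tubeKernel c t y = 0 :=
  setIntegral_eq_zero_of_forall_eq_zero fun t ht => if_neg (by linarith [ht.1])

theorem setIntegral_tubeKernel_of_pos (hc0 : 0 < c) (hc1 : c < 1) {α y : ℝ} (hα : 0 ≤ α)
    (hy : 0 < y) :
    ∫ t in Ioc 0 α, tubeKernel c t y = (y - √(y ^ 2 - c * min α y ^ 2)) / c := by
  have hmin : 0 ≤ min α y := le_min hα hy.le
  calc ∫ t in Ioc 0 α, tubeKernel c t y = ∫ t in Ioo 0 (min α y), tubeKernel c t y := by
        rw [setIntegral_eq_of_subset_of_forall_sdiff_eq_zero measurableSet_Ioc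
          (Ioc_subset_Ioc_right (min_le_left α y)), integral_Ioc_eq_integral_Ioo]
        rintro t ⟨⟨ht0, htα⟩, ht⟩
        exact if_neg fun hty => ht ⟨ht0, le_min htα hty.le⟩
    _ = ∫ t in Ioo 0 (min α y), t * (1 / √(y ^ 2 - c * t ^ 2)) :=
        setIntegral_congr_fun measurableSet_Ioo fun t ht =>
          if_pos (ht.2.trans_le (min_le_right α y))
    _ = (y - √(y ^ 2 - c * min α y ^ 2)) / c := by
        rw [← integral_Ioc_eq_integral_Ioo, ← integral_of_le hmin]
        refine integral_mul_one_div_sqrt_sq_sub hc0 hy.le hmin ?_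
        nlinarith [mul_le_mul_of_nonneg_left (pow_le_pow_left₀ hmin (min_le_right α y) 2) hc0.le,
          mul_pos (sub_pos.2 hc1) (pow_pos hy 2)]

theorem one_add_mul_setIntegral_tubeKernel_of_le {κ α y : ℝ} (hκ : 0 < κ) (hκ1 : κ < 1)
    (hy : y ∈ Ioc 0 α) :
    (1 + κ) * ∫ t in Ioc 0 α, tubeKernel (1 - κ ^ 2) t y = y := by
  have hκ1' : 1 - κ ≠ 0 := by linarith
  have hc0 : 1 - κ ^ 2 ≠ 0 := by nlinarith
  rw [setIntegral_tubeKernel_of_pos (by nlinarith) (by nlinarith) (hy.1.le.trans hy.2) hy.1,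
    min_eq_right hy.2, show y ^ 2 - (1 - κ ^ 2) * y ^ 2 = (κ * y) ^ 2 by ring,
    Real.sqrt_sq (mul_pos hκ hy.1).le]
  field_simp
  ring

theorem one_add_mul_setIntegral_tubeKernel_of_lt {κ α y : ℝ} (hκ : 0 < κ) (hκ1 : κ < 1)
    (hα : 0 ≤ α) (hαy : α < y) :
    (1 + κ) * ∫ t in Ioc 0 α, tubeKernel (1 - κ ^ 2) t y =
      1 / (1 - κ) * (y - √(y ^ 2 - (1 - κ ^ 2) * α ^ 2)) := by
  have hκ1' : 1 - κ ≠ 0 := by linarith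
  have hc0 : 1 - κ ^ 2 ≠ 0 := by nlinarith
  rw [setIntegral_tubeKernel_of_pos (by nlinarith) (by nlinarith) hα (hα.trans_lt hαy),
    min_eq_left hαy.le]
  field_simp
  ring

theorem Vo_formula_general
    (κ : ℝ) (hκ : 0 < κ) (hκ1 : κ < 1)
    (μ : Measure ℝ) [IsFiniteMeasure μ]
    (Vo : ℝ → ℝ)
    (hVo : ∀ α, Vo α =
      (1 + κ) * ∫ t in (0:ℝ)..α, t *
        ∫ y in Ioi t, (1 / Real.sqrt (y ^ 2 - (1 - κ ^ 2) * t ^ 2)) ∂μ) :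
    ∀ α > 0, Vo α =
      (∫ y in Ioc (0:ℝ) α, y ∂μ) +
      (1 / (1 - κ)) *
        ∫ y in Ioi α, (y - Real.sqrt (y ^ 2 - (1 - κ ^ 2) * α ^ 2)) ∂μ := by
  intro α hα
  have hK := integrable_uncurry_tubeKernel (c := 1 - κ ^ 2) (by nlinarith) μ (α := α)
  have hsection : Integrable (fun y => ∫ t in Ioc 0 α, tubeKernel (1 - κ ^ 2) t y) μ :=
    hK.integral_prod_right
  calc Vo α = ∫ y, (1 + κ) * (∫ t in Ioc 0 α, tubeKernel (1 - κ ^ 2) t y) ∂μ := by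
        simp_rw [hVo, integral_of_le hα.le, ← integral_tubeKernel_left,
          integral_integral_swap hK, MeasureTheory.integral_const_mul]
    _ = ∫ y in Ioc 0 α, (1 + κ) * (∫ t in Ioc 0 α, tubeKernel (1 - κ ^ 2) t y) ∂μ +
          ∫ y in Ioi α, (1 + κ) * (∫ t in Ioc 0 α, tubeKernel (1 - κ ^ 2) t y) ∂μ :=
        integral_eq_setIntegral_Ioc_add_setIntegral_Ioi (hsection.const_mul _)
          α fun y hy => by rw [setIntegral_tubeKernel_of_nonpos hy, mul_zero]
    _ = _ := by
        rw [← MeasureTheory.integral_const_mul]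
        congr 1
        · exact setIntegral_congr_fun measurableSet_Ioc fun y hy =>
            one_add_mul_setIntegral_tubeKernel_of_le hκ hκ1 hy
        · exact setIntegral_congr_fun measurableSet_Ioi fun y hy =>
            one_add_mul_setIntegral_tubeKernel_of_lt hκ hκ1 hα.le hy

theorem Vo_formula
    (κ : ℝ) (hκ : 0 < κ) (hκ1 : κ < 1)
    (μ : Measure ℝ) [IsFiniteMeasure μ]
    (a b : ℝ) (ha : 0 < a) (hab : a ≤ b) (hsupp : μ (Icc a b)ᶜ = 0)
    (Vo : ℝ → ℝ)
    (hVo : ∀ α, Vo α =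
      (1 + κ) * ∫ t in (0:ℝ)..α, t *
        ∫ y in Ioi t, (1 / Real.sqrt (y ^ 2 - (1 - κ ^ 2) * t ^ 2)) ∂μ) :
    ∀ α > 0, Vo α =
      (∫ y in Ioc (0:ℝ) α, y ∂μ) +
      (1 / (1 - κ)) *
        ∫ y in Ioi α, (y - Real.sqrt (y ^ 2 - (1 - κ ^ 2) * α ^ 2)) ∂μ :=
  Vo_formula_general κ hκ hκ1 μ Vo hVo
end TubeKernel
end

section
/- Let $V_w, V_o : [0,\infty)\to[0,\infty)$ be nondecreasing functions such that $\alpha \mapsto V_w(\alpha)+V_o(\alpha)$ is a strictly increasing bijection of $[0,\infty)$ onto itself, and suppose $G:[0,\infty)\to[0,\infty)$ satisfies $V_w(\alpha) = G(V_o(\alpha)+V_w(\alpha))$ for all $\alpha\ge 0$. Then $G$ is 1-Lipschitz: $|G(x)-G(y)| \le |x-y|$ for all $x,y\ge 0$. -/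
/-!
Write `x = Vw α + Vo α` and `y = Vw β + Vo β`. Then `G x - G y = Vw α - Vw β`, and since `Vw`
and `Vo` move in the same direction between `α` and `β`, this change is at most that of the sum
`Vw + Vo`, which is `x - y`.
-/

open Set

theorem MonotoneOn.abs_sub_le_abs_add_sub_add {α β : Type*} [LinearOrder α]
    [AddCommGroup β] [LinearOrder β] [IsOrderedAddMonoid β] {f g : α → β} {s : Set α}
    (hf : MonotoneOn f s) (hg : MonotoneOn g s) {a b : α} (ha : a ∈ s) (hb : b ∈ s) :
    |f a - f b| ≤ |(f a + g a) - (f b + g b)| := by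
  wlog hab : a ≤ b generalizing a b
  · rw [abs_sub_comm, abs_sub_comm (f a + g a)]
    exact this hb ha (le_of_not_ge hab)
  have hfab : f a ≤ f b := hf ha hb hab
  have hgab : g a ≤ g b := hg ha hb hab
  rw [abs_of_nonpos (sub_nonpos.2 hfab),
    abs_of_nonpos (sub_nonpos.2 (add_le_add hfab hgab)), neg_sub, neg_sub,
    add_sub_add_comm]
  exact le_add_of_nonneg_right (sub_nonneg.2 hgab)

theorem displacement_characteristic_lipschitz_general
    (Vw Vo G : ℝ → ℝ)
    (hVwmono : MonotoneOn Vw (Ici 0)) (hVomono : MonotoneOn Vo (Ici 0))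
    (hsum_bij : BijOn (fun α => Vw α + Vo α) (Ici 0) (Ici 0))
    (hG : ∀ α ∈ Ici (0:ℝ), Vw α = G (Vo α + Vw α)) :
    ∀ x ∈ Ici (0:ℝ), ∀ y ∈ Ici (0:ℝ), |G x - G y| ≤ |x - y| := by
  have hG_sum : ∀ α ∈ Ici (0:ℝ), G (Vw α + Vo α) = Vw α := fun α hα => by
    rw [add_comm, ← hG α hα]
  intro x hx y hy
  obtain ⟨α, hα, rfl⟩ := hsum_bij.surjOn hx
  obtain ⟨β, hβ, rfl⟩ := hsum_bij.surjOn hy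
  rw [hG_sum α hα, hG_sum β hβ]
  exact hVwmono.abs_sub_le_abs_add_sub_add hVomono hα hβ

theorem displacement_characteristic_lipschitz
    (Vw Vo G : ℝ → ℝ)
    (hVw0 : ∀ α ∈ Ici (0:ℝ), 0 ≤ Vw α) (hVo0 : ∀ α ∈ Ici (0:ℝ), 0 ≤ Vo α)
    (hVwmono : MonotoneOn Vw (Ici 0)) (hVomono : MonotoneOn Vo (Ici 0))
    (hsum_mono : StrictMonoOn (fun α => Vw α + Vo α) (Ici 0))
    (hsum_bij : BijOn (fun α => Vw α + Vo α) (Ici 0) (Ici 0))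
    (hG : ∀ α ∈ Ici (0:ℝ), Vw α = G (Vo α + Vw α)) :
    ∀ x ∈ Ici (0:ℝ), ∀ y ∈ Ici (0:ℝ), |G x - G y| ≤ |x - y| :=
  displacement_characteristic_lipschitz_general Vw Vo G hVwmono hVomono hsum_bij hG
end

section
/- Let $0<\kappa<1$, $\alpha_{max}>0$, and define the operator $T$ on $L^{\infty}(0,\alpha_{max})$ by $(TV)(\alpha) = \kappa(1-\kappa^2)\alpha^4 \int_{\alpha}^{\alpha_{max}} \frac{V(y)}{y^2 (y^2-(1-\kappa^2)\alpha^2)^{3/2}}\,dy$. Then $T$ is a bounded linear operator with $\|TV\|_{L^\infty} \le \frac{1-\kappa}{1+\kappa}\|V\|_{L^\infty}$ for all $V \in L^\infty(0,\alpha_{max})$. -/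
/-!
For fixed `α` the kernel `y ↦ (y² (y² - c)^{3/2})⁻¹`, `c = (1 - κ²) α²`, is positive on `[α, αmax]`
and has the elementary primitive `(c - 2y²) / (c² y √(y² - c))`. At `y = α` we have `√(α² - c) = κα`,
and the primitive never exceeds its limit `-2/c²` at infinity (this is `(y - √(y² - c))² ≥ 0`), so
`κ(1 - κ²)α⁴ ∫_α^αmax kernel ≤ ((1 + κ²) - 2κ) / (1 - κ²) = (1 - κ)/(1 + κ)` uniformly in `α`.
Bounding `|V|` by its essential supremum inside the integral gives the `L^∞` estimate.
-/

open MeasureTheory intervalIntegral Set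

lemma norm_integral_mul_le_of_norm_le {f w : ℝ → ℝ} {a b M : ℝ} (hab : a ≤ b) (hM : 0 ≤ M)
    (hw : IntervalIntegrable w volume a b) (hw0 : ∀ y ∈ Icc a b, 0 ≤ w y)
    (hf : ∀ᵐ y, y ∈ Ioc a b → ‖f y‖ ≤ M) :
    ‖∫ y in a..b, f y * w y‖ ≤ M * ∫ y in a..b, w y := by
  by_cases hfw : IntervalIntegrable (fun y => f y * w y) volume a b
  · rw [← intervalIntegral.integral_const_mul]
    refine norm_integral_le_of_norm_le hab ?_ (hw.const_mul M)
    filter_upwards [hf] with y hfy hy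
    rw [norm_mul, Real.norm_of_nonneg (hw0 y (Ioc_subset_Icc_self hy))]
    exact mul_le_mul_of_nonneg_right (hfy hy) (hw0 y (Ioc_subset_Icc_self hy))
  · rw [integral_undef hfw, norm_zero]
    exact mul_nonneg hM (integral_nonneg hab hw0)

lemma eLpNorm_top_le_mul_of_ae_bound {X : Type*} [MeasurableSpace X] {μ : Measure X}
    {f g : X → ℝ} {C : ℝ} (hC : 0 < C)
    (h : ∀ M, 0 ≤ M → (∀ᵐ x ∂μ, ‖g x‖ ≤ M) → ∀ᵐ x ∂μ, ‖f x‖ ≤ C * M) :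
    eLpNorm f ⊤ μ ≤ ENNReal.ofReal C * eLpNorm g ⊤ μ := by
  by_cases hg : eLpNorm g ⊤ μ = ⊤
  · rw [hg, ENNReal.mul_top (ENNReal.ofReal_pos.mpr hC).ne']
    exact le_top
  set M := (eLpNorm g ⊤ μ).toReal
  have hgM : ∀ᵐ x ∂μ, ‖g x‖ ≤ M := by
    filter_upwards [ae_le_eLpNormEssSup (f := g) (μ := μ)] with x hx
    simpa [M, eLpNorm_exponent_top] using ENNReal.toReal_mono hg hx
  calc eLpNorm f ⊤ μ ≤ ENNReal.ofReal (C * M) := by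
        rw [eLpNorm_exponent_top]
        exact eLpNormEssSup_le_of_ae_bound (h M ENNReal.toReal_nonneg hgM)
    _ = ENNReal.ofReal C * eLpNorm g ⊤ μ := by
        rw [ENNReal.ofReal_mul hC.le, ENNReal.ofReal_toReal hg]

noncomputable section

namespace HistoryMatching

def kernel (c y : ℝ) : ℝ := (y ^ 2 * (y ^ 2 - c) ^ ((3 : ℝ) / 2))⁻¹

def kernelPrimitive (c t : ℝ) : ℝ := (c - 2 * t ^ 2) / (c ^ 2 * (t * √(t ^ 2 - c)))

lemma rpow_three_halves {q : ℝ} (hq : 0 < q) : q ^ ((3 : ℝ) / 2) = q * √q := by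
  rw [show (3 : ℝ) / 2 = 1 + 1 / 2 by norm_num, Real.rpow_add hq, Real.rpow_one, Real.sqrt_eq_rpow]

lemma kernel_nonneg {c y : ℝ} (hcy : c ≤ y ^ 2) : 0 ≤ kernel c y :=
  inv_nonneg.mpr (mul_nonneg (sq_nonneg y) (Real.rpow_nonneg (sub_nonneg.mpr hcy) _))

lemma hasDerivAt_kernelPrimitive {c y : ℝ} (hc : c ≠ 0) (hy : y ≠ 0) (hcy : c < y ^ 2) :
    HasDerivAt (kernelPrimitive c) (kernel c y) y := by
  have hq : 0 < y ^ 2 - c := sub_pos.mpr hcy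
  set s := √(y ^ 2 - c) with hs_def
  have hs : 0 < s := Real.sqrt_pos.mpr hq
  have hsqrt : HasDerivAt (fun t => √(t ^ 2 - c)) (1 / (2 * s) * (2 * y)) y :=
    (Real.hasDerivAt_sqrt hq.ne').comp y (by simpa using (hasDerivAt_pow 2 y).sub_const c)
  have hnum : HasDerivAt (fun t => c - 2 * t ^ 2) (-(2 * (2 * y))) y := by
    simpa using ((hasDerivAt_pow 2 y).const_mul 2).const_sub c
  have hden : HasDerivAt (fun t => c ^ 2 * (t * √(t ^ 2 - c)))
      (c ^ 2 * (1 * s + y * (1 / (2 * s) * (2 * y)))) y :=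
    ((hasDerivAt_id' y).mul hsqrt).const_mul (c ^ 2)
  refine (hnum.div hden (mul_ne_zero (pow_ne_zero 2 hc) (mul_ne_zero hy hs.ne'))).congr_deriv ?_
  have hs2 : s ^ 2 = y ^ 2 - c := Real.sq_sqrt hq.le
  rw [kernel, rpow_three_halves hq, ← hs_def, ← hs2]
  clear_value s
  obtain rfl : c = y ^ 2 - s ^ 2 := by linarith
  field_simp
  ring

lemma continuousOn_kernel {c a b : ℝ} (ha : 0 < a) (hca : c < a ^ 2) :
    ContinuousOn (kernel c) (Icc a b) := by
  intro y ⟨hay, _⟩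
  have hq : 0 < y ^ 2 - c := by nlinarith
  have hy : 0 < y := ha.trans_le hay
  refine ContinuousAt.continuousWithinAt (ContinuousAt.inv₀ ?_ ?_)
  · exact (continuousAt_id.pow 2).mul
      (((continuousAt_id.pow 2).sub continuousAt_const).rpow_const (Or.inl hq.ne'))
  · exact (mul_pos (pow_pos hy 2) (Real.rpow_pos_of_pos hq _)).ne'

lemma integral_kernel {c a b : ℝ} (hc : c ≠ 0) (ha : 0 < a) (hab : a ≤ b) (hca : c < a ^ 2) :
    ∫ y in a..b, kernel c y = kernelPrimitive c b - kernelPrimitive c a := by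
  refine integral_eq_sub_of_hasDerivAt (fun y hy => ?_)
    ((continuousOn_kernel ha hca).mono (uIcc_of_le hab).subset).intervalIntegrable
  rw [uIcc_of_le hab] at hy
  exact hasDerivAt_kernelPrimitive hc (ha.trans_le hy.1).ne' (by nlinarith [hy.1])

lemma kernelPrimitive_le {c t : ℝ} (hc : c ≠ 0) (ht : 0 < t) (hct : c < t ^ 2) :
    kernelPrimitive c t ≤ -2 / c ^ 2 := by
  have hq : 0 < t ^ 2 - c := sub_pos.mpr hct
  have hs : 0 < √(t ^ 2 - c) := Real.sqrt_pos.mpr hq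
  have hs2 : √(t ^ 2 - c) ^ 2 = t ^ 2 - c := Real.sq_sqrt hq.le
  rw [kernelPrimitive, div_le_div_iff₀ (by positivity) (by positivity)]
  nlinarith [sq_nonneg (t - √(t ^ 2 - c)), pow_pos (sq_pos_of_ne_zero hc) 1]

lemma kernelPrimitive_scaled {κ a : ℝ} (hκ : 0 < κ) (ha : 0 < a) :
    kernelPrimitive ((1 - κ ^ 2) * a ^ 2) a
      = -(1 + κ ^ 2) / (κ * ((1 - κ ^ 2) * a ^ 2) ^ 2) := by
  have hsqrt : √(a ^ 2 - (1 - κ ^ 2) * a ^ 2) = κ * a := by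
    rw [show a ^ 2 - (1 - κ ^ 2) * a ^ 2 = (κ * a) ^ 2 by ring]
    exact Real.sqrt_sq (by positivity)
  rw [kernelPrimitive, hsqrt]
  field_simp
  ring

lemma integral_kernel_le {κ a b : ℝ} (hκ : 0 < κ) (hκ1 : κ < 1) (ha : 0 < a) (hab : a ≤ b) :
    κ * (1 - κ ^ 2) * a ^ 4 * ∫ y in a..b, kernel ((1 - κ ^ 2) * a ^ 2) y
      ≤ (1 - κ) / (1 + κ) := by
  set c := (1 - κ ^ 2) * a ^ 2 with hc_def
  have hκ2 : 0 < 1 - κ ^ 2 := by nlinarith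
  have hc : 0 < c := by positivity
  have hca : c < a ^ 2 := by nlinarith [mul_pos (pow_pos hκ 2) (pow_pos ha 2)]
  have hb := kernelPrimitive_le hc.ne' (ha.trans_le hab) (hca.trans_le (by gcongr))
  rw [integral_kernel hc.ne' ha hab hca, kernelPrimitive_scaled hκ ha]
  calc κ * (1 - κ ^ 2) * a ^ 4 * (kernelPrimitive c b - -(1 + κ ^ 2) / (κ * c ^ 2))
      ≤ κ * (1 - κ ^ 2) * a ^ 4 * (-2 / c ^ 2 - -(1 + κ ^ 2) / (κ * c ^ 2)) := by gcongr
    _ = (1 - κ) / (1 + κ) := by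
      rw [hc_def]
      field_simp
      ring

lemma norm_scaled_integral_mul_kernel_le {κ a b M : ℝ} {V : ℝ → ℝ} (hκ : 0 < κ) (hκ1 : κ < 1)
    (ha : 0 < a) (hab : a ≤ b) (hM : 0 ≤ M) (hV : ∀ᵐ y, y ∈ Ioc a b → ‖V y‖ ≤ M) :
    ‖κ * (1 - κ ^ 2) * a ^ 4 * ∫ y in a..b, V y * kernel ((1 - κ ^ 2) * a ^ 2) y‖
      ≤ (1 - κ) / (1 + κ) * M := by
  have hκ2 : 0 < 1 - κ ^ 2 := by nlinarith
  have hca : (1 - κ ^ 2) * a ^ 2 < a ^ 2 := by nlinarith [mul_pos (pow_pos hκ 2) (pow_pos ha 2)]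
  have hkernel : ∀ y ∈ Icc a b, 0 ≤ kernel ((1 - κ ^ 2) * a ^ 2) y := fun y hy =>
    kernel_nonneg (hca.le.trans (pow_le_pow_left₀ ha.le hy.1 2))
  have hint : IntervalIntegrable (kernel ((1 - κ ^ 2) * a ^ 2)) volume a b :=
    ((continuousOn_kernel ha hca).mono (uIcc_of_le hab).subset).intervalIntegrable
  rw [norm_mul, Real.norm_of_nonneg (by positivity)]
  calc κ * (1 - κ ^ 2) * a ^ 4 * ‖∫ y in a..b, V y * kernel ((1 - κ ^ 2) * a ^ 2) y‖
      ≤ κ * (1 - κ ^ 2) * a ^ 4 * (M * ∫ y in a..b, kernel ((1 - κ ^ 2) * a ^ 2) y) := by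
        gcongr
        exact norm_integral_mul_le_of_norm_le hab hM hint hkernel hV
    _ = M * (κ * (1 - κ ^ 2) * a ^ 4 * ∫ y in a..b, kernel ((1 - κ ^ 2) * a ^ 2) y) := by ring
    _ ≤ M * ((1 - κ) / (1 + κ)) := by gcongr; exact integral_kernel_le hκ hκ1 ha hab
    _ = (1 - κ) / (1 + κ) * M := mul_comm _ _

end HistoryMatching

end

open HistoryMatching

theorem T_bounded_operator_general
    (κ αmax : ℝ) (hκ : 0 < κ) (hκ1 : κ < 1)
    (T : (ℝ → ℝ) → (ℝ → ℝ))
    (hT : ∀ V α, T V α = κ * (1 - κ ^ 2) * α ^ 4 *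
      ∫ y in α..αmax, V y / (y ^ 2 * (y ^ 2 - (1 - κ ^ 2) * α ^ 2) ^ ((3:ℝ)/2))) :
    -- linearity
    (∀ (V₁ V₂ : ℝ → ℝ) (c : ℝ) (α : ℝ),
      IntervalIntegrable (fun y => V₁ y / (y ^ 2 * (y ^ 2 - (1 - κ ^ 2) * α ^ 2) ^ ((3:ℝ)/2))) volume α αmax →
      IntervalIntegrable (fun y => V₂ y / (y ^ 2 * (y ^ 2 - (1 - κ ^ 2) * α ^ 2) ^ ((3:ℝ)/2))) volume α αmax →
      T (fun y => c * V₁ y + V₂ y) α = c * T V₁ α + T V₂ α) ∧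
    -- boundedness in L∞
    (∀ V : ℝ → ℝ,
      eLpNorm (T V) ⊤ (volume.restrict (Ioc 0 αmax)) ≤
        ENNReal.ofReal ((1 - κ) / (1 + κ)) * eLpNorm V ⊤ (volume.restrict (Ioc 0 αmax))) := by
  have hT' : ∀ V α, T V α = κ * (1 - κ ^ 2) * α ^ 4 *
      ∫ y in α..αmax, V y * kernel ((1 - κ ^ 2) * α ^ 2) y := fun V α => by
    simp only [hT, kernel, div_eq_mul_inv]
  refine ⟨fun V₁ V₂ c α h₁ h₂ => ?_, fun V => ?_⟩
  · simp only [hT, add_div, mul_div_assoc]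
    rw [integral_add (h₁.const_mul c) h₂, intervalIntegral.integral_const_mul]
    ring
  refine eLpNorm_top_le_mul_of_ae_bound (div_pos (by linarith) (by linarith)) fun M hM hVM => ?_
  rw [ae_restrict_iff' measurableSet_Ioc] at hVM ⊢
  refine ae_of_all _ fun α ⟨hα, hαb⟩ => ?_
  rw [hT']
  refine norm_scaled_integral_mul_kernel_le hκ hκ1 hα hαb hM ?_
  filter_upwards [hVM] with y hVy ⟨hαy, hyb⟩
  exact hVy ⟨hα.trans hαy, hyb⟩

theorem T_bounded_operator
    (κ αmax : ℝ) (hκ : 0 < κ) (hκ1 : κ < 1) (hαmax : 0 < αmax)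
    (T : (ℝ → ℝ) → (ℝ → ℝ))
    (hT : ∀ V α, T V α = κ * (1 - κ ^ 2) * α ^ 4 *
      ∫ y in α..αmax, V y / (y ^ 2 * (y ^ 2 - (1 - κ ^ 2) * α ^ 2) ^ ((3:ℝ)/2))) :
    -- linearity
    (∀ (V₁ V₂ : ℝ → ℝ) (c : ℝ) (α : ℝ),
      IntervalIntegrable (fun y => V₁ y / (y ^ 2 * (y ^ 2 - (1 - κ ^ 2) * α ^ 2) ^ ((3:ℝ)/2))) volume α αmax →
      IntervalIntegrable (fun y => V₂ y / (y ^ 2 * (y ^ 2 - (1 - κ ^ 2) * α ^ 2) ^ ((3:ℝ)/2))) volume α αmax →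
      T (fun y => c * V₁ y + V₂ y) α = c * T V₁ α + T V₂ α) ∧
    -- boundedness in L∞
    (∀ V : ℝ → ℝ,
      eLpNorm (T V) ⊤ (volume.restrict (Ioc 0 αmax)) ≤
        ENNReal.ofReal ((1 - κ) / (1 + κ)) * eLpNorm V ⊤ (volume.restrict (Ioc 0 αmax))) :=
  T_bounded_operator_general κ αmax hκ hκ1 T hT
end

section
/- Let $0<\kappa<1$, $\alpha_{max}>0$, $V_{max}>0$, and for a function $G$ define $h_G(\alpha) = \frac{\kappa}{1-\kappa^2}(\alpha_{max}-R(\alpha))\left(2G(V_{max}) + \frac{1+\kappa}{\kappa}(V_{max}-G(V_{max}))\right) + \frac{\kappa}{1-\kappa^2}\cdot\frac{(\alpha_{max}-R(\alpha))^2}{\alpha_{max}R(\alpha)}\,G(V_{max})$, where $R(\alpha)=\sqrt{\alpha_{max}^2-(1-\kappa^2)\alpha^2}$. If $|G_1(V_{max}) - G_2(V_{max})| \le \delta$, then $\|h_{G_1} - h_{G_2}\|_{L^\infty(0,\alpha_{max})} \le \left(\alpha_{max} + \frac{2}{1+\kappa}\right)\delta$. -/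
open Set

/-!
Both `h_{G₁}` and `h_{G₂}` are affine in the single number `G(V_max)`, so their difference is
`C(α) · (G₁(V_max) - G₂(V_max))`, where, with `r = R(α)` and `s = α_max - r`,
`C(α) = κ s² / ((1 - κ²) α_max r) - s / (1 + κ)`.
On `[0, α_max]` one has `κ α_max ≤ r ≤ α_max`, hence `0 ≤ s ≤ (1 - κ) α_max`; so the first term
of `C(α)` is at most `(1 - κ) / (1 + κ)` and the second at most `(1 - κ) α_max / (1 + κ)`.
-/

lemma mul_le_sqrt_sq_sub_mul_sq {κ a α : ℝ} (hκ : 0 ≤ κ) (hκ2 : κ ^ 2 ≤ 1) (ha : 0 ≤ a)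
    (hα : |α| ≤ a) : κ * a ≤ Real.sqrt (a ^ 2 - (1 - κ ^ 2) * α ^ 2) := by
  have hα2 : α ^ 2 ≤ a ^ 2 := sq_le_sq' (abs_le.mp hα).1 (abs_le.mp hα).2
  rw [← Real.sqrt_sq (mul_nonneg hκ ha)]
  exact Real.sqrt_le_sqrt (by nlinarith)

lemma sqrt_sq_sub_mul_sq_le {κ a α : ℝ} (hκ2 : κ ^ 2 ≤ 1) (ha : 0 ≤ a) :
    Real.sqrt (a ^ 2 - (1 - κ ^ 2) * α ^ 2) ≤ a := by
  rw [Real.sqrt_le_left ha]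
  nlinarith [sq_nonneg α]

lemma boundary_term_sub {κ : ℝ} (hκ : κ ≠ 0) (hκ1 : 1 - κ ^ 2 ≠ 0) (s q V g₁ g₂ : ℝ) :
    (κ / (1 - κ ^ 2) * s * (2 * g₁ + (1 + κ) / κ * (V - g₁)) + κ / (1 - κ ^ 2) * q * g₁) -
      (κ / (1 - κ ^ 2) * s * (2 * g₂ + (1 + κ) / κ * (V - g₂)) + κ / (1 - κ ^ 2) * q * g₂) =
      (κ / (1 - κ ^ 2) * q - s / (1 + κ)) * (g₁ - g₂) := by
  have hκ' : 1 + κ ≠ 0 := fun h ↦ hκ1 (by linear_combination (1 - κ) * h)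
  field_simp
  ring

section Coefficient

variable {κ a r : ℝ} (hκ : 0 < κ) (hκ1 : κ < 1) (hr : κ * a ≤ r) (hra : r ≤ a)
include hκ hκ1 hr hra

lemma sub_div_one_add_le : (a - r) / (1 + κ) ≤ a := by
  rw [div_le_iff₀ (by linarith)]
  nlinarith

lemma mul_sq_sub_div_le (ha : 0 < a) :
    κ / (1 - κ ^ 2) * ((a - r) ^ 2 / (a * r)) ≤ (1 - κ) / (1 + κ) := by
  have hr0 : 0 < r := lt_of_lt_of_le (mul_pos hκ ha) hr
  have hsq : (a - r) ^ 2 ≤ ((1 - κ) * a) ^ 2 := pow_le_pow_left₀ (by linarith) (by linarith) 2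
  have hκ2 : 1 - κ ^ 2 = (1 - κ) * (1 + κ) := by ring
  rw [hκ2, div_mul_div_comm, div_le_div_iff₀ (by positivity) (by nlinarith)]
  calc κ * (a - r) ^ 2 * (1 + κ) ≤ κ * ((1 - κ) * a) ^ 2 * (1 + κ) := by gcongr
    _ = (1 - κ) * (κ * a * a) * ((1 - κ) * (1 + κ)) := by ring
    _ ≤ (1 - κ) * (r * a) * ((1 - κ) * (1 + κ)) := by gcongr
    _ = (1 - κ) * ((1 - κ) * (1 + κ) * (a * r)) := by ring

lemma abs_boundary_coeff_le (ha : 0 < a) :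
    |κ / (1 - κ ^ 2) * ((a - r) ^ 2 / (a * r)) - (a - r) / (1 + κ)| ≤ a + 2 / (1 + κ) := by
  have hr0 : 0 < r := lt_of_lt_of_le (mul_pos hκ ha) hr
  have hκ2 : 0 < 1 - κ ^ 2 := by nlinarith
  have hs : 0 ≤ a - r := by linarith
  calc _ ≤ |κ / (1 - κ ^ 2) * ((a - r) ^ 2 / (a * r))| + |(a - r) / (1 + κ)| := abs_sub _ _
    _ = κ / (1 - κ ^ 2) * ((a - r) ^ 2 / (a * r)) + (a - r) / (1 + κ) := by
      rw [abs_of_nonneg (by positivity), abs_of_nonneg (by positivity)]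
    _ ≤ (1 - κ) / (1 + κ) + a :=
      add_le_add (mul_sq_sub_div_le hκ hκ1 hr hra ha) (sub_div_one_add_le hκ hκ1 hr hra)
    _ ≤ a + 2 / (1 + κ) := by
      rw [add_comm]
      gcongr
      linarith

end Coefficient

theorem h_stability_general
    (κ αmax Vmax δ : ℝ) (hκ : 0 < κ) (hκ1 : κ < 1) (hαmax : 0 < αmax)
    (R : ℝ → ℝ)
    (hR : ∀ α, R α = Real.sqrt (αmax ^ 2 - (1 - κ ^ 2) * α ^ 2))
    (G₁ G₂ : ℝ → ℝ)
    (hGδ : |G₁ Vmax - G₂ Vmax| ≤ δ)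
    (h : (ℝ → ℝ) → ℝ → ℝ)
    (hh : ∀ (G : ℝ → ℝ) (α : ℝ), h G α =
      κ / (1 - κ ^ 2) * (αmax - R α) *
        (2 * G Vmax + (1 + κ) / κ * (Vmax - G Vmax)) +
      κ / (1 - κ ^ 2) * ((αmax - R α) ^ 2 / (αmax * R α)) * G Vmax) :
    ∀ α ∈ Icc (0:ℝ) αmax, |h G₁ α - h G₂ α| ≤ (αmax + 2 / (1 + κ)) * δ := by
  intro α ⟨hα0, hα1⟩
  have hκ2 : κ ^ 2 < 1 := by nlinarith
  have hRlow : κ * αmax ≤ R α := hR α ▸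
    mul_le_sqrt_sq_sub_mul_sq hκ.le hκ2.le hαmax.le (by rwa [abs_of_nonneg hα0])
  have hRup : R α ≤ αmax := hR α ▸ sqrt_sq_sub_mul_sq_le hκ2.le hαmax.le
  rw [hh, hh, boundary_term_sub hκ.ne' (sub_pos.mpr hκ2).ne', abs_mul]
  exact mul_le_mul (abs_boundary_coeff_le hκ hκ1 hRlow hRup hαmax) hGδ (abs_nonneg _)
    (by positivity)

theorem h_stability
    (κ αmax Vmax δ : ℝ) (hκ : 0 < κ) (hκ1 : κ < 1) (hαmax : 0 < αmax)
    (hVmax : 0 < Vmax) (hδ : 0 ≤ δ)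
    (R : ℝ → ℝ)
    (hR : ∀ α, R α = Real.sqrt (αmax ^ 2 - (1 - κ ^ 2) * α ^ 2))
    (G₁ G₂ : ℝ → ℝ)
    (hGδ : |G₁ Vmax - G₂ Vmax| ≤ δ)
    (h : (ℝ → ℝ) → ℝ → ℝ)
    (hh : ∀ (G : ℝ → ℝ) (α : ℝ), h G α =
      κ / (1 - κ ^ 2) * (αmax - R α) *
        (2 * G Vmax + (1 + κ) / κ * (Vmax - G Vmax)) +
      κ / (1 - κ ^ 2) * ((αmax - R α) ^ 2 / (αmax * R α)) * G Vmax) :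
    ∀ α ∈ Icc (0:ℝ) αmax, |h G₁ α - h G₂ α| ≤ (αmax + 2 / (1 + κ)) * δ :=
  h_stability_general κ αmax Vmax δ hκ hκ1 hαmax R hR G₁ G₂ hGδ h hh
end
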